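/- For every integer a, every complex root ρ of f_a is nonzero, and if ρ is a root of f_a then so is -1 - 1/ρ; moreover the three complex roots of f_a are exactly ρ, -1 - 1/ρ and -1/(1+ρ), and these are pairwise distinct. -/

import Mathlib

/-!
Since `f_a 0 = -1` and `f_a (-1) = 1`, a root `ρ` satisfies `ρ (1 + ρ) ≠ 0`, and then
`f_a = (X - ρ) (X - σ ρ) (X - σ² ρ)` for the order-three Möbius map `σ x = -1 - 1/x`, with
`σ² ρ = -1/(1 + ρ)`. Two of these points coincide only if `ρ ^ 2 + ρ + 1 = 0`; for such a
root, comparing with `f_a` forces `a = 3ρ`, whence `a ^ 2 + 3a + 9 = 0`, impossible for an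
integer `a` since `(2a + 3) ^ 2 + 27 > 0`.
-/

def simplestCubic {R : Type*} [CommRing R] (a x : R) : R :=
  x ^ 3 - a * x ^ 2 - (a + 3) * x - 1

section CommRing

variable {R : Type*} [CommRing R] {a ρ : R}

theorem simplestCubic_zero (a : R) : simplestCubic a 0 = -1 := by
  simp [simplestCubic]

theorem simplestCubic_neg_one (a : R) : simplestCubic a (-1) = 1 := by
  simp only [simplestCubic]; ring

theorem ne_zero_of_simplestCubic_eq_zero [Nontrivial R] (hρ : simplestCubic a ρ = 0) :
    ρ ≠ 0 := by
  rintro rfl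
  simp [simplestCubic_zero] at hρ

theorem one_add_ne_zero_of_simplestCubic_eq_zero [Nontrivial R]
    (hρ : simplestCubic a ρ = 0) : 1 + ρ ≠ 0 := by
  intro h
  rw [eq_neg_of_add_eq_zero_right h, simplestCubic_neg_one] at hρ
  exact one_ne_zero hρ

theorem eq_three_mul_of_simplestCubic_eq_zero (hρ : simplestCubic a ρ = 0)
    (h : ρ ^ 2 + ρ + 1 = 0) : a = 3 * ρ := by
  unfold simplestCubic at hρ
  linear_combination hρ - (ρ - 1 - a) * h

theorem int_sq_add_three_mul_add_nine_ne_zero (a : ℤ) : a ^ 2 + 3 * a + 9 ≠ 0 := by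
  nlinarith [sq_nonneg (2 * a + 3)]

theorem sq_add_self_add_one_ne_zero_of_simplestCubic_eq_zero [CharZero R] {a : ℤ}
    (hρ : simplestCubic (a : R) ρ = 0) : ρ ^ 2 + ρ + 1 ≠ 0 := by
  intro h
  have ha := eq_three_mul_of_simplestCubic_eq_zero hρ h
  apply int_sq_add_three_mul_add_nine_ne_zero a
  have : ((a ^ 2 + 3 * a + 9 : ℤ) : R) = 0 := by
    push_cast
    rw [ha]
    linear_combination 9 * h
  exact_mod_cast this

end CommRing

section Field

variable {K : Type*} [Field K] {a ρ : K}

theorem simplestCubic_eq_mul_of_simplestCubic_eq_zero (hρ : simplestCubic a ρ = 0) (z : K) :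
    simplestCubic a z = (z - ρ) * (z - (-1 - 1 / ρ)) * (z - (-1 / (1 + ρ))) := by
  have h0 := ne_zero_of_simplestCubic_eq_zero hρ
  have h1 := one_add_ne_zero_of_simplestCubic_eq_zero hρ
  unfold simplestCubic at hρ ⊢
  field_simp
  linear_combination (z ^ 2 + z) * hρ

theorem pairwise_ne_of_sq_add_self_add_one_ne_zero (h0 : ρ ≠ 0) (h1 : 1 + ρ ≠ 0)
    (h : ρ ^ 2 + ρ + 1 ≠ 0) :
    ρ ≠ -1 - 1 / ρ ∧ ρ ≠ -1 / (1 + ρ) ∧ -1 - 1 / ρ ≠ -1 / (1 + ρ) := by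
  refine ⟨fun he => h ?_, fun he => h ?_, fun he => h ?_⟩ <;> field_simp at he
  · linear_combination he
  · linear_combination he
  · linear_combination -he

end Field

/-- For every integer `a`, every complex root `ρ` of `f_a` is nonzero; if `ρ` is a root
then so is `-1 - 1/ρ`; the three complex roots of `f_a` are exactly `ρ`, `-1 - 1/ρ` and
`-1/(1+ρ)`, and these are pairwise distinct. -/
theorem simplest_cubic_roots (a : ℤ) (ρ : ℂ)
    (hρ : ρ ^ 3 - (a : ℂ) * ρ ^ 2 - ((a : ℂ) + 3) * ρ - 1 = 0) :
    ρ ≠ 0 ∧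
    ((-1 - 1/ρ) ^ 3 - (a : ℂ) * (-1 - 1/ρ) ^ 2 - ((a : ℂ) + 3) * (-1 - 1/ρ) - 1 = 0) ∧
    (∀ z : ℂ, z ^ 3 - (a : ℂ) * z ^ 2 - ((a : ℂ) + 3) * z - 1 = 0 ↔
      z = ρ ∨ z = -1 - 1/ρ ∨ z = -1/(1 + ρ)) ∧
    (ρ ≠ -1 - 1/ρ ∧ ρ ≠ -1/(1 + ρ) ∧ (-1 - 1/ρ : ℂ) ≠ -1/(1 + ρ)) := by
  change simplestCubic (a : ℂ) ρ = 0 at hρ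
  have h0 := ne_zero_of_simplestCubic_eq_zero hρ
  have factor := simplestCubic_eq_mul_of_simplestCubic_eq_zero hρ
  refine ⟨h0, ?_, fun z => ?_, pairwise_ne_of_sq_add_self_add_one_ne_zero h0
    (one_add_ne_zero_of_simplestCubic_eq_zero hρ)
    (sq_add_self_add_one_ne_zero_of_simplestCubic_eq_zero hρ)⟩
  · change simplestCubic _ _ = 0
    rw [factor]
    ring
  · change simplestCubic _ _ = 0 ↔ _
    simp only [factor, mul_eq_zero, sub_eq_zero, or_assoc]
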